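/- Let δ ∈ (0, 1], let μ ≥ 1, and let 0 ≤ s ≤ t. Then (1/μ²) · [ (1 − e^{−2(t−s)μ²}) + (1 − e^{−(t−s)μ²})² (1 − e^{−2sμ²}) ] ≤ 2^δ · μ^{4δ−2} · (t − s)^δ · (1 + 2^δ s^δ). -/

import Mathlib

open Real

/-!
With `x = (t - s) μ²` and `y = s μ²` the bracket is
`(1 - e^{-2x}) + (1 - e^{-x})² (1 - e^{-2y})`. Each factor `1 - e^{-z}` lies in `[0, 1]` and is at
most `z`, hence at most `z ^ δ` for `δ ∈ [0, 1]`; so the bracket is at most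
`(2x)^δ + x^δ (2y)^δ = 2^δ x^δ (1 + y^δ)`. Pulling out the powers of `μ` and using
`μ^{2δ} ≤ μ^{4δ}` for `μ ≥ 1` gives the claim.
-/

lemma one_sub_exp_neg_nonneg {z : ℝ} (hz : 0 ≤ z) : 0 ≤ 1 - exp (-z) := by
  simpa using exp_le_one_iff.mpr (neg_nonpos.mpr hz)

lemma one_sub_exp_neg_le_one (z : ℝ) : 1 - exp (-z) ≤ 1 := by
  linarith [exp_pos (-z)]

lemma one_sub_exp_neg_le_rpow {z δ : ℝ} (hz : 0 ≤ z) (hδ0 : 0 ≤ δ) (hδ1 : δ ≤ 1) :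
    1 - exp (-z) ≤ z ^ δ := by
  rcases le_or_gt z 1 with hz1 | hz1
  · calc 1 - exp (-z) ≤ z := by linarith [add_one_le_exp (-z)]
      _ ≤ z ^ δ := by simpa using rpow_le_rpow_of_exponent_ge' hz hz1 hδ0 hδ1
  · exact (one_sub_exp_neg_le_one z).trans (one_le_rpow hz1.le hδ0)

lemma one_sub_exp_neg_bracket_le {x y δ : ℝ} (hx : 0 ≤ x) (hy : 0 ≤ y)
    (hδ0 : 0 ≤ δ) (hδ1 : δ ≤ 1) :
    (1 - exp (-(2 * x))) + (1 - exp (-x)) ^ 2 * (1 - exp (-(2 * y))) ≤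
      2 ^ δ * x ^ δ * (1 + y ^ δ) := by
  have h2x := one_sub_exp_neg_le_rpow (by positivity : 0 ≤ 2 * x) hδ0 hδ1
  have h2y := one_sub_exp_neg_le_rpow (by positivity : 0 ≤ 2 * y) hδ0 hδ1
  have hsq : (1 - exp (-x)) ^ 2 ≤ x ^ δ :=
    (pow_le_of_le_one (one_sub_exp_neg_nonneg hx) (one_sub_exp_neg_le_one x) two_ne_zero).trans
      (one_sub_exp_neg_le_rpow hx hδ0 hδ1)
  rw [mul_rpow zero_le_two hx] at h2x
  rw [mul_rpow zero_le_two hy] at h2y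
  calc (1 - exp (-(2 * x))) + (1 - exp (-x)) ^ 2 * (1 - exp (-(2 * y)))
      ≤ 2 ^ δ * x ^ δ + x ^ δ * (2 ^ δ * y ^ δ) := by
        gcongr
        exact one_sub_exp_neg_nonneg (by positivity)
    _ = 2 ^ δ * x ^ δ * (1 + y ^ δ) := by ring

lemma rpow_four_mul_sub_two {μ : ℝ} (hμ : 0 < μ) (δ : ℝ) :
    μ ^ (4 * δ - 2) = ((μ ^ 2) ^ δ) ^ 2 / μ ^ 2 := by
  rw [rpow_sub hμ, rpow_two, ← rpow_natCast ((μ ^ 2) ^ δ) 2, ← rpow_mul (by positivity),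
    ← rpow_natCast μ 2, ← rpow_mul hμ.le]
  norm_num
  ring_nf

lemma mul_one_add_mul_le_sq_mul_one_add {m a c : ℝ} (hm : 1 ≤ m) (ha : 1 ≤ a) (hc : 0 ≤ c) :
    m * (1 + c * m) ≤ m ^ 2 * (1 + a * c) := by
  nlinarith [mul_le_mul_of_nonneg_left hm (zero_le_one.trans hm),
    mul_le_mul_of_nonneg_right ha (mul_nonneg hc (sq_nonneg m))]

/-- The Hölder-type bound on the second moment of time increments of the Fourier
modes of the stochastic convolution: for `δ ∈ (0,1]`, `μ ≥ 1` and `0 ≤ s ≤ t`,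
`(1/μ²)[(1 − e^{−2(t−s)μ²}) + (1 − e^{−(t−s)μ²})²(1 − e^{−2sμ²})]
  ≤ 2^δ μ^{4δ−2} (t−s)^δ (1 + 2^δ s^δ)`. -/
theorem increment_second_moment_bound (δ μ s t : ℝ)
    (hδ0 : 0 < δ) (hδ1 : δ ≤ 1) (hμ : 1 ≤ μ) (hs : 0 ≤ s) (hst : s ≤ t) :
    (1 / μ ^ 2) *
        ((1 - Real.exp (-2 * (t - s) * μ ^ 2)) +
          (1 - Real.exp (-(t - s) * μ ^ 2)) ^ 2 * (1 - Real.exp (-2 * s * μ ^ 2))) ≤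
      (2 : ℝ) ^ δ * μ ^ (4 * δ - 2) * (t - s) ^ δ * (1 + (2 : ℝ) ^ δ * s ^ δ) := by
  have hμ0 : 0 < μ := one_pos.trans_le hμ
  have hts : 0 ≤ t - s := sub_nonneg.mpr hst
  have hbracket := one_sub_exp_neg_bracket_le (mul_nonneg hts (sq_nonneg μ))
    (mul_nonneg hs (sq_nonneg μ)) hδ0.le hδ1
  rw [mul_rpow hts (sq_nonneg μ), mul_rpow hs (sq_nonneg μ)] at hbracket
  set m := (μ ^ 2) ^ δ
  have hm : 1 ≤ m := one_le_rpow (one_le_pow₀ hμ) hδ0.le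
  have hb : 0 ≤ (t - s) ^ δ := rpow_nonneg hts δ
  rw [rpow_four_mul_sub_two hμ0, show -2 * (t - s) * μ ^ 2 = -(2 * ((t - s) * μ ^ 2)) by ring,
    show -(t - s) * μ ^ 2 = -((t - s) * μ ^ 2) by ring,
    show -2 * s * μ ^ 2 = -(2 * (s * μ ^ 2)) by ring]
  calc _ ≤ (1 / μ ^ 2) * (2 ^ δ * ((t - s) ^ δ * m) * (1 + s ^ δ * m)) := by gcongr
    _ = (1 / μ ^ 2) * 2 ^ δ * (t - s) ^ δ * (m * (1 + s ^ δ * m)) := by ring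
    _ ≤ (1 / μ ^ 2) * 2 ^ δ * (t - s) ^ δ * (m ^ 2 * (1 + 2 ^ δ * s ^ δ)) := by
        gcongr (1 / μ ^ 2) * 2 ^ δ * (t - s) ^ δ * ?_
        exact mul_one_add_mul_le_sq_mul_one_add hm (one_le_rpow one_le_two hδ0.le)
          (rpow_nonneg hs δ)
    _ = _ := by ring
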